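/- arXiv:0901.3992 — 3 statements merged into one kernel-verified Lean document; each statement's English description precedes it below -/
import Mathlib

section
/- With the KLR polynomial representation operators as above, for s_l(i) ≠ i one has the quadratic relation: applying σ_{s_l(i)}(l) after σ_i(l) gives multiplication by (-1)^{h_{i_l,i_{l+1}}} (x_i(l+1) - x_i(l))^{h_{i_l,i_{l+1}} + h_{i_{l+1},i_l}} on F_i, i.e. σ_{s_l(i)}(l) ∘ σ_i(l) = (x_i(l) - x_i(l+1))^{h_{i_l,i_{l+1}}} (x_i(l+1) - x_i(l))^{h_{i_{l+1},i_l}} · id on F_i. -/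
open MvPolynomial

theorem mul_map_mul_map_eq_of_involutive {R : Type*} [CommRing R] (σ : R →+* R)
    (hσ : Function.Involutive σ) {d : R} (hd : σ d = -d) (p q : ℕ) (f : R) :
    d ^ q * σ (d ^ p * σ f) = (-d) ^ p * d ^ q * f := by
  rw [map_mul, map_pow, hd, hσ f]
  ring

theorem MvPolynomial.rename_involutive {σ R : Type*} [CommSemiring R] {e : σ → σ}
    (he : Function.Involutive e) : Function.Involutive (rename (R := R) e) := by
  intro p
  rw [rename_rename, he.comp_self, rename_id, AlgHom.id_apply]

theorem MvPolynomial.rename_swap_X_sub_X {σ R : Type*} [CommRing R] [DecidableEq σ] (a b : σ) :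
    rename (R := R) (Equiv.swap a b) (X b - X a) = -(X b - X a) := by
  rw [map_sub, rename_X, rename_X, Equiv.swap_apply_left, Equiv.swap_apply_right, neg_sub]

theorem klr_quadratic_relation_general {I : Type*}
    (k : Type*) [Field k] (m : ℕ)
    (h : I → I → ℕ)
    (i : Fin m → I) (l : Fin m) (hl : (l : ℕ) + 1 < m)
    (f : MvPolynomial (Fin m) k) :
    (X ⟨(l : ℕ) + 1, hl⟩ - X l) ^ (h (i ⟨(l : ℕ) + 1, hl⟩) (i l)) *
        rename (Equiv.swap l ⟨(l : ℕ) + 1, hl⟩)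
          ((X ⟨(l : ℕ) + 1, hl⟩ - X l) ^ (h (i l) (i ⟨(l : ℕ) + 1, hl⟩)) *
            rename (Equiv.swap l ⟨(l : ℕ) + 1, hl⟩) f) =
      (X l - X ⟨(l : ℕ) + 1, hl⟩) ^ (h (i l) (i ⟨(l : ℕ) + 1, hl⟩)) *
        (X ⟨(l : ℕ) + 1, hl⟩ - X l) ^ (h (i ⟨(l : ℕ) + 1, hl⟩) (i l)) * f := by
  rw [← neg_sub (X ⟨(l : ℕ) + 1, hl⟩) (X l)]
  exact mul_map_mul_map_eq_of_involutive
    (rename (R := k) (Equiv.swap l ⟨(l : ℕ) + 1, hl⟩)).toRingHom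
    (rename_involutive (Equiv.swap_apply_self _ _)) (rename_swap_X_sub_X _ _)
    (h (i l) (i ⟨(l : ℕ) + 1, hl⟩)) (h (i ⟨(l : ℕ) + 1, hl⟩) (i l)) f

/-- The quadratic relation in the KLR polynomial representation: for `s_l(i) ≠ i`,
the composite `σ_{s_l(i)}(l) ∘ σ_i(l)` acts on `F_i` as multiplication by
`(x_i(l) - x_i(l+1))^{h_{i_l, i_{l+1}}} (x_i(l+1) - x_i(l))^{h_{i_{l+1}, i_l}}`,
where `σ_i(l) : F_i → F_{s_l(i)}`, `f ↦ (x(l+1) - x(l))^{h_{i_l,i_{l+1}}} s_l(f)`. -/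
theorem klr_quadratic_relation {I : Type*}
    (k : Type*) [Field k] [CharZero k] (m : ℕ)
    (h : I → I → ℕ)
    (i : Fin m → I) (l : Fin m) (hl : (l : ℕ) + 1 < m)
    (hne : i ∘ Equiv.swap l ⟨(l : ℕ) + 1, hl⟩ ≠ i)
    (f : MvPolynomial (Fin m) k) :
    (X ⟨(l : ℕ) + 1, hl⟩ - X l) ^ (h (i ⟨(l : ℕ) + 1, hl⟩) (i l)) *
        rename (Equiv.swap l ⟨(l : ℕ) + 1, hl⟩)
          ((X ⟨(l : ℕ) + 1, hl⟩ - X l) ^ (h (i l) (i ⟨(l : ℕ) + 1, hl⟩)) *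
            rename (Equiv.swap l ⟨(l : ℕ) + 1, hl⟩) f) =
      (X l - X ⟨(l : ℕ) + 1, hl⟩) ^ (h (i l) (i ⟨(l : ℕ) + 1, hl⟩)) *
        (X ⟨(l : ℕ) + 1, hl⟩ - X l) ^ (h (i ⟨(l : ℕ) + 1, hl⟩) (i l)) * f :=
  klr_quadratic_relation_general k m h i l hl f
end

section
/- Let k be a field of characteristic zero and P = k[x_1,...,x_m]. Then P is a free module of rank m! over the subring of symmetric polynomials P^{S_m}. -/
/-!
The Artin monomials `x₀^e₀ ⋯ x_{m-1}^e_{m-1}` with `eᵢ < m - i`, of which there are `m!`, span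
`P` over `P^{S_m}`. This goes by induction on `m`: `x₀` is a root of the monic polynomial
`∏ᵢ (T - xᵢ)` of degree `m` with symmetric coefficients, so `P^{S_m}[x₀]` is spanned by
`1, x₀, …, x₀^(m-1)`; and `P^{S_m}[x₀]` contains the symmetric polynomials in `x₁, …, x_{m-1}`,
since their elementary symmetric polynomials are (up to sign) the coefficients of
`∏_{i ≥ 1} (T - xᵢ) = ∏ᵢ (T - xᵢ) / (T - x₀)`.

On the other hand `S_m` acts faithfully on the domain `P` with invariant ring `P^{S_m}`, so by
Artin's theorem on the fraction fields `P` has rank `|S_m| = m!` over `P^{S_m}`. A spanning family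
whose size is the rank of a module over a commutative ring is a basis.
-/

open Polynomial

namespace Polynomial

theorem divByMonic_mem_lifts {R S : Type*} [CommRing R] [CommRing S] {f : R →+* S} {p q : S[X]}
    (hp : p ∈ lifts f) (hq : q ∈ lifts f) (hmonic : q.Monic) : p /ₘ q ∈ lifts f := by
  obtain ⟨p', rfl⟩ := hp
  obtain ⟨q', rfl, -, hq'⟩ := lifts_and_natDegree_eq_and_monic hq hmonic
  exact ⟨p' /ₘ q', map_divByMonic f hq'⟩

theorem coeff_mem_of_eq_X_sub_C_mul {A : Type*} [CommRing A] {T : Subring A} {a : A}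
    (ha : a ∈ T) {p q : A[X]} (h : p = (X - C a) * q) (hp : ∀ n, p.coeff n ∈ T) (n : ℕ) :
    q.coeff n ∈ T := by
  have hpl : p ∈ lifts T.subtype := (lifts_iff_coeff_lifts p).mpr fun n => ⟨⟨_, hp n⟩, rfl⟩
  have hXl : X - C a ∈ lifts T.subtype := (mem_lifts _).mpr ⟨X - C ⟨a, ha⟩, by simp⟩
  have hq : q = p /ₘ (X - C a) := by rw [h, mul_divByMonic_cancel_left _ (monic_X_sub_C a)]
  obtain ⟨c, hc⟩ :=
    (lifts_iff_coeff_lifts q).mp (hq ▸ divByMonic_mem_lifts hpl hXl (monic_X_sub_C a)) n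
  exact hc ▸ c.2

theorem Monic.pow_natDegree_eq_neg_sum {R : Type*} [CommRing R] {f : R[X]}
    (hf : f.Monic) {x : R} (hx : f.eval x = 0) :
    x ^ f.natDegree = -∑ i ∈ Finset.range f.natDegree, f.coeff i * x ^ i := by
  rw [hf.as_sum] at hx
  simpa [eval_finsetSum, eq_neg_iff_add_eq_zero] using hx

end Polynomial

namespace MvPolynomial

section Action

variable {σ R : Type*} [CommSemiring R]

noncomputable instance : MulSemiringAction (Equiv.Perm σ) (MvPolynomial σ R) :=
  MulSemiringAction.compHom _
    { toFun := fun e => renameEquiv R e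
      map_one' := AlgEquiv.ext fun p => rename_id_apply p
      map_mul' := fun e f => AlgEquiv.ext fun p => (rename_rename f e p).symm }

theorem perm_smul_eq_rename (e : Equiv.Perm σ) (p : MvPolynomial σ R) : e • p = rename e p :=
  rfl

instance [Nontrivial R] :
    IsGaloisGroup (Equiv.Perm σ) (symmetricSubalgebra σ R) (MvPolynomial σ R) where
  faithful := ⟨fun h => Equiv.ext fun i => X_injective (R := R) <| by
    simpa [perm_smul_eq_rename] using h (X i)⟩
  commutes := ⟨fun e s p => by
    simp only [perm_smul_eq_rename, Subalgebra.smul_def, smul_eq_mul, map_mul, s.2 e]⟩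
  isInvariant := ⟨fun p hp => ⟨⟨p, hp⟩, rfl⟩⟩

end Action

theorem finrank_symmetricSubalgebra {σ R : Type*} [Fintype σ] [CommRing R] [IsDomain R] :
    Module.finrank (symmetricSubalgebra σ R) (MvPolynomial σ R) =
      (Fintype.card σ).factorial := by
  rw [← IsGaloisGroup.card_eq_finrank' (Equiv.Perm σ), Nat.card_perm, Nat.card_eq_fintype_card]

variable {σ : Type*} (R : Type*) [CommRing R]

theorem prod_X_sub_C_coeff [Fintype σ] {k : ℕ} (h : k ≤ Fintype.card σ) :
    (∏ i : σ, (Polynomial.X - Polynomial.C (X i : MvPolynomial σ R))).coeff k =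
      (-1) ^ (Fintype.card σ - k) * esymm σ R (Fintype.card σ - k) := by
  have := Multiset.prod_X_sub_C_coeff (Finset.univ.val.map (X : σ → MvPolynomial σ R))
    (k := k) (by simpa using h)
  rw [Multiset.map_map, Multiset.card_map, Finset.card_val, Finset.card_univ] at this
  rw [Finset.prod_eq_multiset_prod, esymm_eq_multiset_esymm]
  exact this

theorem isSymmetric_coeff_prod_X_sub_C [Fintype σ] (k : ℕ) :
    ((∏ i : σ, (Polynomial.X - Polynomial.C (X i : MvPolynomial σ R))).coeff k).IsSymmetric := by
  intro e
  rw [← AlgHom.coe_toRingHom, ← Polynomial.coeff_map, Polynomial.map_prod]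
  simp only [Polynomial.map_sub, Polynomial.map_X, Polynomial.map_C, AlgHom.coe_toRingHom,
    rename_X]
  rw [Fintype.prod_equiv e (fun i => Polynomial.X - Polynomial.C (X (e i)))
    (fun i => Polynomial.X - Polynomial.C (X i)) fun _ => rfl]

theorem finSuccEquiv_symm_C {m : ℕ} (c : MvPolynomial (Fin m) R) :
    (finSuccEquiv R m).symm (Polynomial.C c) = rename Fin.succ c := by
  rw [AlgEquiv.symm_apply_eq]
  have : (finSuccEquiv R m).toAlgHom.comp (rename Fin.succ) = Polynomial.CAlgHom :=
    algHom_ext fun i => by simp [finSuccEquiv_X_succ]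
  exact (DFunLike.congr_fun this c).symm

def artinExponents (m : ℕ) : Finset (Fin m → ℕ) :=
  Fintype.piFinset fun i => Finset.range (m - i)

theorem card_artinExponents (m : ℕ) : (artinExponents m).card = m.factorial := by
  rw [artinExponents, Fintype.card_piFinset, ← Nat.descFactorial_self,
    Nat.descFactorial_eq_prod_range, ← Fin.prod_univ_eq_prod_range]
  simp

theorem cons_mem_artinExponents {m a : ℕ} (ha : a < m + 1) {b : Fin m → ℕ}
    (hb : b ∈ artinExponents m) : (Fin.cons a b : Fin (m + 1) → ℕ) ∈ artinExponents (m + 1) := by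
  simp only [artinExponents, Fintype.mem_piFinset, Finset.mem_range] at hb ⊢
  refine Fin.cases (by simpa using ha) (fun i => ?_)
  simpa using hb i

theorem tail_mem_artinExponents {m : ℕ} {e : Fin (m + 1) → ℕ}
    (he : e ∈ artinExponents (m + 1)) : Fin.tail e ∈ artinExponents m := by
  simp only [artinExponents, Fintype.mem_piFinset, Finset.mem_range] at he ⊢
  intro i
  simpa [Fin.tail] using he i.succ

noncomputable def artinMonomial (m : ℕ) (e : artinExponents m) : MvPolynomial (Fin m) R :=
  ∏ i, X i ^ (e : Fin m → ℕ) i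

noncomputable def artinSpan (m : ℕ) :
    Submodule (symmetricSubalgebra (Fin m) R) (MvPolynomial (Fin m) R) :=
  Submodule.span _ (Set.range (artinMonomial R m))

variable {R} {m : ℕ}

theorem artinMonomial_succ (e : artinExponents (m + 1)) :
    artinMonomial R (m + 1) e =
      X 0 ^ (e : Fin (m + 1) → ℕ) 0 *
        rename Fin.succ (∏ i, X i ^ Fin.tail (e : Fin (m + 1) → ℕ) i) := by
  simp [artinMonomial, Fin.prod_univ_succ, map_prod, Fin.tail]

theorem X_zero_pow_mul_rename_mem_artinSpan {a : ℕ} (ha : a < m + 1) {b : Fin m → ℕ}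
    (hb : b ∈ artinExponents m) :
    X 0 ^ a * rename Fin.succ (∏ i, X i ^ b i) ∈ artinSpan R (m + 1) :=
  Submodule.subset_span ⟨⟨_, cons_mem_artinExponents ha hb⟩, by
    rw [artinMonomial_succ]; simp [Fin.tail]⟩

theorem X_zero_pow_succ_mul_rename_mem_artinSpan [Nontrivial R] {b : Fin m → ℕ}
    (hb : b ∈ artinExponents m) :
    X 0 ^ (m + 1) * rename Fin.succ (∏ i, X i ^ b i) ∈ artinSpan R (m + 1) := by
  set f := ∏ i : Fin (m + 1), (Polynomial.X - Polynomial.C (X i : MvPolynomial (Fin (m + 1)) R))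
  have hf : f.Monic := monic_prod_of_monic _ _ fun i _ => monic_X_sub_C _
  have hdeg : f.natDegree = m + 1 := by
    rw [natDegree_finsetProd_X_sub_C_eq_card, Finset.card_univ, Fintype.card_fin]
  have hroot : f.eval (X 0) = 0 := by
    rw [Polynomial.eval_prod]; exact Finset.prod_eq_zero (Finset.mem_univ 0) (by simp)
  have hpow := hf.pow_natDegree_eq_neg_sum hroot
  rw [hdeg] at hpow
  rw [hpow, ← Finset.sum_neg_distrib, Finset.sum_mul]
  refine Submodule.sum_mem _ fun t ht => ?_
  have hsymm : (-f.coeff t).IsSymmetric := (isSymmetric_coeff_prod_X_sub_C R t).neg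
  convert Submodule.smul_mem _ (⟨_, hsymm⟩ : symmetricSubalgebra (Fin (m + 1)) R)
    (X_zero_pow_mul_rename_mem_artinSpan (Finset.mem_range.mp ht) hb) using 1
  simp [Subalgebra.smul_def, mul_assoc]

theorem X_zero_mul_mem_artinSpan [Nontrivial R] {y : MvPolynomial (Fin (m + 1)) R}
    (hy : y ∈ artinSpan R (m + 1)) : X 0 * y ∈ artinSpan R (m + 1) := by
  induction hy using Submodule.span_induction with
  | mem y hy =>
    obtain ⟨e, rfl⟩ := hy
    have htail := tail_mem_artinExponents e.2
    rw [artinMonomial_succ, ← mul_assoc, ← pow_succ']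
    have he : (e : Fin (m + 1) → ℕ) 0 < m + 1 := by
      simpa using Finset.mem_range.mp (Fintype.mem_piFinset.mp e.2 0)
    rcases Nat.lt_or_ge ((e : Fin (m + 1) → ℕ) 0 + 1) (m + 1) with h | h
    · exact X_zero_pow_mul_rename_mem_artinSpan h htail
    · rw [show (e : Fin (m + 1) → ℕ) 0 + 1 = m + 1 by omega]
      exact X_zero_pow_succ_mul_rename_mem_artinSpan htail
  | zero => simp
  | add y z _ _ hy hz => rw [mul_add]; exact add_mem hy hz
  | smul s y _ hy => rw [mul_smul_comm]; exact Submodule.smul_mem _ s hy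

theorem mul_mem_artinSpan_of_mem_adjoin [Nontrivial R] {y z : MvPolynomial (Fin (m + 1)) R}
    (hy : y ∈ Algebra.adjoin (symmetricSubalgebra (Fin (m + 1)) R) {X 0})
    (hz : z ∈ artinSpan R (m + 1)) : y * z ∈ artinSpan R (m + 1) := by
  induction hy using Algebra.adjoin_induction generalizing z with
  | mem y hy => rw [Set.mem_singleton_iff.mp hy]; exact X_zero_mul_mem_artinSpan hz
  | algebraMap s => rw [← Algebra.smul_def]; exact Submodule.smul_mem _ s hz
  | add y y' _ _ hy hy' => rw [add_mul]; exact add_mem (hy hz) (hy' hz)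
  | mul y y' _ _ hy hy' => rw [mul_assoc]; exact hy (hy' hz)

theorem rename_succ_esymm_mem_adjoin {j : ℕ} (hj : j ≤ m) :
    rename Fin.succ (esymm (Fin m) R j) ∈
      Algebra.adjoin (symmetricSubalgebra (Fin (m + 1)) R) {X 0} := by
  set T := Algebra.adjoin (symmetricSubalgebra (Fin (m + 1)) R)
    {(X 0 : MvPolynomial (Fin (m + 1)) R)}
  set g := (∏ i : Fin m, (Polynomial.X - Polynomial.C (X i : MvPolynomial (Fin m) R))).map
    (rename Fin.succ).toRingHom
  have hfg : ∏ i : Fin (m + 1), (Polynomial.X - Polynomial.C (X i)) =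
      (Polynomial.X - Polynomial.C (X 0)) * g := by
    simp [g, Fin.prod_univ_succ, Polynomial.map_prod]
  have hg : g.coeff (m - j) ∈ T.toSubring :=
    coeff_mem_of_eq_X_sub_C_mul (Algebra.self_mem_adjoin_singleton _ _) hfg
      (fun n => T.algebraMap_mem ⟨_, isSymmetric_coeff_prod_X_sub_C R n⟩) _
  have hcoeff : g.coeff (m - j) = (-1) ^ j * rename Fin.succ (esymm (Fin m) R j) := by
    rw [Polynomial.coeff_map, prod_X_sub_C_coeff R (by simp), Fintype.card_fin,
      Nat.sub_sub_self hj]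
    simp
  rw [hcoeff] at hg
  simpa [← mul_assoc, ← mul_pow] using T.mul_mem (T.pow_mem (T.neg_mem T.one_mem) j) hg

theorem rename_succ_mem_adjoin_of_isSymmetric {c : MvPolynomial (Fin m) R} (hc : c.IsSymmetric) :
    rename Fin.succ c ∈ Algebra.adjoin (symmetricSubalgebra (Fin (m + 1)) R) {X 0} := by
  obtain ⟨q, hq⟩ := (esymmAlgHom_fin_bijective R m).2 ⟨c, hc⟩
  have hc_eq : c = aeval (fun i : Fin m => esymm (Fin m) R (i + 1)) q := by
    rw [← esymmAlgHom_apply, hq]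
  have hrange : (aeval fun i : Fin m => rename Fin.succ (esymm (Fin m) R (i + 1))).range ≤
      (Algebra.adjoin (symmetricSubalgebra (Fin (m + 1)) R) {X 0}).restrictScalars R := by
    rw [aeval_range, Algebra.adjoin_le_iff]
    rintro _ ⟨i, rfl⟩
    exact rename_succ_esymm_mem_adjoin i.2
  rw [hc_eq, ← AlgHom.comp_apply, comp_aeval]
  exact hrange (AlgHom.mem_range_self _ q)

theorem rename_succ_mem_artinSpan [Nontrivial R] (ih : artinSpan R m = ⊤)
    (c : MvPolynomial (Fin m) R) : rename Fin.succ c ∈ artinSpan R (m + 1) := by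
  have hc : c ∈ artinSpan R m := ih ▸ Submodule.mem_top
  induction hc using Submodule.span_induction with
  | mem c hc =>
    obtain ⟨b, rfl⟩ := hc
    simpa [artinMonomial] using X_zero_pow_mul_rename_mem_artinSpan (R := R) m.succ_pos b.2
  | zero => simp
  | add c c' _ _ hc hc' => rw [map_add]; exact add_mem hc hc'
  | smul s c _ hc =>
    rw [Subalgebra.smul_def, smul_eq_mul, map_mul]
    exact mul_mem_artinSpan_of_mem_adjoin (rename_succ_mem_adjoin_of_isSymmetric s.2) hc

variable (R) in
theorem artinSpan_eq_top [Nontrivial R] : ∀ m, artinSpan R m = ⊤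
  | 0 => by
    refine eq_top_iff.mpr fun p _ => ?_
    have hp : p.IsSymmetric := fun e => by rw [Subsingleton.elim e 1]; exact rename_id_apply p
    have h1 : artinMonomial R 0 ⟨fun i => i.elim0, Fintype.mem_piFinset.mpr fun i => i.elim0⟩ =
        1 := by
      simp [artinMonomial]
    have h1mem : (1 : MvPolynomial (Fin 0) R) ∈ artinSpan R 0 :=
      h1 ▸ Submodule.subset_span (Set.mem_range_self _)
    simpa [Subalgebra.smul_def] using
      Submodule.smul_mem _ (⟨p, hp⟩ : symmetricSubalgebra (Fin 0) R) h1mem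
  | m + 1 => by
    refine eq_top_iff.mpr fun p _ => ?_
    rw [← (finSuccEquiv R m).symm_apply_apply p]
    induction finSuccEquiv R m p using Polynomial.induction_on with
    | C c => rw [finSuccEquiv_symm_C]; exact rename_succ_mem_artinSpan (artinSpan_eq_top m) c
    | add p q hp hq => rw [map_add]; exact add_mem hp hq
    | monomial n c h =>
      have hX : (finSuccEquiv R m).symm Polynomial.X = X 0 := by
        rw [AlgEquiv.symm_apply_eq, finSuccEquiv_X_zero]
      rw [pow_succ, ← mul_assoc, map_mul, hX, mul_comm]
      exact X_zero_mul_mem_artinSpan h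

variable (R) in
theorem linearIndependent_artinMonomial [IsDomain R] (m : ℕ) :
    LinearIndependent (symmetricSubalgebra (Fin m) R) (artinMonomial R m) :=
  linearIndependent_of_top_le_span_of_card_eq_finrank (artinSpan_eq_top R m).ge <| by
    rw [Fintype.card_coe, card_artinExponents, finrank_symmetricSubalgebra, Fintype.card_fin]

variable (R) in
noncomputable def artinBasis [IsDomain R] (m : ℕ) :
    Module.Basis (artinExponents m) (symmetricSubalgebra (Fin m) R) (MvPolynomial (Fin m) R) :=
  .mk (linearIndependent_artinMonomial R m) (artinSpan_eq_top R m).ge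

end MvPolynomial

theorem polynomials_free_over_symmetric_general (k : Type*) [Field k] (m : ℕ) :
    Module.Free (MvPolynomial.symmetricSubalgebra (Fin m) k) (MvPolynomial (Fin m) k) ∧
      Module.rank (MvPolynomial.symmetricSubalgebra (Fin m) k) (MvPolynomial (Fin m) k)
        = m.factorial :=
  ⟨.of_basis (MvPolynomial.artinBasis k m), by
    rw [rank_eq_card_basis (MvPolynomial.artinBasis k m), Fintype.card_coe,
      MvPolynomial.card_artinExponents]⟩

/-- Over a field `k` of characteristic zero, `P = k[x_1,...,x_m]` is a free module
of rank `m!` over the subring `P^{S_m}` of symmetric polynomials. -/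
theorem polynomials_free_over_symmetric (k : Type*) [Field k] [CharZero k] (m : ℕ) :
    Module.Free (MvPolynomial.symmetricSubalgebra (Fin m) k) (MvPolynomial (Fin m) k) ∧
      Module.rank (MvPolynomial.symmetricSubalgebra (Fin m) k) (MvPolynomial (Fin m) k)
        = m.factorial :=
  polynomials_free_over_symmetric_general k m
end

section
/- Let k be a field of characteristic zero, P = k[x_1,...,x_m] with its S_m-action permuting variables, and S = P^{S_m}. The nil-Hecke algebra NH_m, defined as the subalgebra of End_S(P) generated by the multiplication operators x_1,...,x_m and the Demazure operators ∂_1,...,∂_{m-1}, acts faithfully on P; equivalently, the defining representation of NH_m on P is injective. -/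
/-!
Pass to the fraction field `K` of `P`. A composite Demazure operator `∂_{l_1} ⋯ ∂_{l_r}` is a
`K`-linear combination `∑_u b_u · u` of the permutation operators, whose coefficients `b_u` are
given by an explicit recursion in the word. Since `s_l` changes the number of inversions by at
most one, `b_u` vanishes when `u` has at least `r` inversions unless `u = s_{l_1} ⋯ s_{l_r}`, and
for a reduced word the coefficient of `u = w` itself is nonzero. By Dedekind's independence of
characters, a relation `∑_w c_w ∂_w = 0` forces `∑_w c_w b^{(w)}_u = 0` for every `u`; at a
`u` of maximal length among the `w` with `c_w ≠ 0` only the term `w = u` survives, so `c_u = 0`.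
-/

open MvPolynomial Finset

variable (m : ℕ)

/-- Coxeter length of `w ∈ S_m` (= number of inversions). -/
def lenPerm (w : Equiv.Perm (Fin m)) : ℕ :=
  (Finset.univ.filter (fun p : Fin m × Fin m => p.1 < p.2 ∧ w p.2 < w p.1)).card

/-- The simple transposition `s_l = (l, l+1)` in `S_m`. -/
def simpleRefl (l : {l : ℕ // l + 1 < m}) : Equiv.Perm (Fin m) :=
  Equiv.swap ⟨l, Nat.lt_of_succ_lt l.2⟩ ⟨(l : ℕ) + 1, l.2⟩

section Length

variable {m}

lemma Fin.eq_and_eq_of_swap_succ_lt {a b x y : Fin m} (hab : (a : ℕ) + 1 = b) (hxy : x < y)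
    (h : Equiv.swap a b y < Equiv.swap a b x) : x = a ∧ y = b := by
  rw [Equiv.swap_apply_def, Equiv.swap_apply_def] at h
  split_ifs at h <;> simp only [Fin.ext_iff, Fin.lt_def] at * <;> omega

lemma simpleRefl_mul_simpleRefl_mul (l : {l : ℕ // l + 1 < m}) (u : Equiv.Perm (Fin m)) :
    simpleRefl m l * (simpleRefl m l * u) = u := by
  rw [← mul_assoc, simpleRefl, Equiv.swap_mul_self, one_mul]

lemma simpleRefl_ne_one (l : {l : ℕ // l + 1 < m}) : simpleRefl m l ≠ 1 := by
  simp [simpleRefl, Equiv.swap_eq_one_iff, Fin.ext_iff]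

lemma lenPerm_one : lenPerm m 1 = 0 := by
  simp only [lenPerm, Finset.card_eq_zero, Finset.filter_eq_empty_iff]
  rintro p - ⟨h₁, h₂⟩
  exact lt_asymm h₁ h₂

/-- The only inversion of `s_l * u` that need not be one of `u` is `(u⁻¹ l, u⁻¹ (l+1))`. -/
lemma lenPerm_simpleRefl_mul_le (l : {l : ℕ // l + 1 < m}) (u : Equiv.Perm (Fin m)) :
    lenPerm m (simpleRefl m l * u) ≤ lenPerm m u + 1 := by
  set a : Fin m := ⟨l, Nat.lt_of_succ_lt l.2⟩
  set b : Fin m := ⟨(l : ℕ) + 1, l.2⟩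
  have hsub : (Finset.univ.filter (fun p : Fin m × Fin m =>
      p.1 < p.2 ∧ (simpleRefl m l * u) p.2 < (simpleRefl m l * u) p.1)) ⊆
      insert (u⁻¹ a, u⁻¹ b)
        (Finset.univ.filter (fun p : Fin m × Fin m => p.1 < p.2 ∧ u p.2 < u p.1)) := by
    rintro ⟨i, j⟩ hp
    simp only [Finset.mem_filter, Finset.mem_univ, true_and, Finset.mem_insert,
      Prod.mk.injEq] at hp ⊢
    obtain ⟨hij, hs⟩ := hp
    rcases lt_or_gt_of_ne (u.injective.ne hij.ne') with hlt | hgt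
    · exact Or.inr ⟨hij, hlt⟩
    · obtain ⟨hi, hj⟩ := Fin.eq_and_eq_of_swap_succ_lt rfl hgt hs
      exact Or.inl ⟨u.eq_symm_apply.mpr hi, u.eq_symm_apply.mpr hj⟩
  exact (Finset.card_le_card hsub).trans (Finset.card_insert_le _ _)

lemma lenPerm_le_simpleRefl_mul (l : {l : ℕ // l + 1 < m}) (u : Equiv.Perm (Fin m)) :
    lenPerm m u ≤ lenPerm m (simpleRefl m l * u) + 1 := by
  simpa [simpleRefl_mul_simpleRefl_mul] using lenPerm_simpleRefl_mul_le l (simpleRefl m l * u)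

lemma lenPerm_prod_le_length (L : List {l : ℕ // l + 1 < m}) :
    lenPerm m (L.map (simpleRefl m)).prod ≤ L.length := by
  induction L with
  | nil => simp [lenPerm_one]
  | cons l L ih =>
    simpa using (lenPerm_simpleRefl_mul_le l _).trans (Nat.add_le_add_right ih 1)

end Length

section Characters

variable {σ R : Type*} [CommRing R]

noncomputable def renameToFrac (u : Equiv.Perm σ) :
    MvPolynomial σ R →+* FractionRing (MvPolynomial σ R) :=
  (algebraMap _ _).comp (rename u).toRingHom

lemma renameToFrac_apply (u : Equiv.Perm σ) (f : MvPolynomial σ R) :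
    renameToFrac u f = algebraMap _ (FractionRing (MvPolynomial σ R)) (rename u f) := rfl

lemma renameToFrac_injective (u : Equiv.Perm σ) :
    Function.Injective (renameToFrac (R := R) u) :=
  (IsFractionRing.injective _ _).comp (rename_injective _ u.injective)

variable [IsDomain R]

noncomputable def renameFrac (u : Equiv.Perm σ) :
    FractionRing (MvPolynomial σ R) →+* FractionRing (MvPolynomial σ R) :=
  IsFractionRing.lift (renameToFrac_injective u)

lemma renameFrac_algebraMap (u : Equiv.Perm σ) (f : MvPolynomial σ R) :
    renameFrac u (algebraMap _ _ f) = renameToFrac u f :=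
  IsFractionRing.lift_algebraMap _ f

lemma renameFrac_renameToFrac (u v : Equiv.Perm σ) (f : MvPolynomial σ R) :
    renameFrac u (renameToFrac v f) = renameToFrac (u * v) f := by
  rw [renameToFrac_apply, renameFrac_algebraMap, renameToFrac_apply, renameToFrac_apply,
    rename_rename]
  rfl

lemma injective_renameToFrac :
    Function.Injective (renameToFrac (σ := σ) (R := R)) := by
  intro u v huv
  ext i
  have := DFunLike.congr_fun huv (X i)
  rw [renameToFrac_apply, renameToFrac_apply, rename_X, rename_X] at this
  exact X_injective (IsFractionRing.injective _ _ this)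

/-- Dedekind's independence of characters, applied to the monoid homomorphisms `renameToFrac u`. -/
lemma eq_zero_of_sum_mul_renameToFrac [Fintype σ] [DecidableEq σ]
    {a : Equiv.Perm σ → FractionRing (MvPolynomial σ R)}
    (h : ∀ f, ∑ u, a u * renameToFrac u f = 0) (u : Equiv.Perm σ) : a u = 0 := by
  have hli := (linearIndependent_monoidHom (MvPolynomial σ R)
    (FractionRing (MvPolynomial σ R))).comp (fun u => (renameToFrac u).toMonoidHom) fun u v huv =>
      injective_renameToFrac (RingHom.ext fun f => DFunLike.congr_fun huv f)
  refine Fintype.linearIndependent_iff.mp hli a (funext fun f => ?_) u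
  simpa [Finset.sum_apply] using h f

end Characters

section Demazure

variable {m} {R : Type*} [CommRing R] [IsDomain R]

local notation "P" => MvPolynomial (Fin m) R
local notation "K" => FractionRing (MvPolynomial (Fin m) R)

noncomputable def simpleRoot (l : {l : ℕ // l + 1 < m}) : P :=
  X ⟨l, Nat.lt_of_succ_lt l.2⟩ - X ⟨(l : ℕ) + 1, l.2⟩

lemma simpleRoot_ne_zero (l : {l : ℕ // l + 1 < m}) : simpleRoot (R := R) l ≠ 0 := by
  simp [simpleRoot, sub_eq_zero, X_injective.eq_iff, Fin.ext_iff]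

variable (R) in
/-- The coefficient of `u` in `∂_{l_1} ⋯ ∂_{l_r}`, `L = [l_1, …, l_r]`, written as a combination
`∑_u b_u · u` of permutations with coefficients in the fraction field. -/
noncomputable def demazureCoeff :
    List {l : ℕ // l + 1 < m} → Equiv.Perm (Fin m) → K
  | [], v => if v = 1 then 1 else 0
  | l :: L, v => (algebraMap P K (simpleRoot l))⁻¹ *
      (demazureCoeff L v - renameFrac (simpleRefl m l) (demazureCoeff L (simpleRefl m l * v)))

section Operators

variable {D : {l : ℕ // l + 1 < m} → Module.End R (MvPolynomial (Fin m) R)}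
  (hD : ∀ l (f : MvPolynomial (Fin m) R), simpleRoot l * D l f = f - rename (simpleRefl m l) f)
include hD

lemma algebraMap_demazure_apply (l : {l : ℕ // l + 1 < m}) (f : P) :
    algebraMap P K (D l f) =
      (algebraMap P K (simpleRoot l))⁻¹ *
        (algebraMap P K f - renameFrac (simpleRefl m l) (algebraMap P K f)) := by
  rw [eq_inv_mul_iff_mul_eq₀ ((map_ne_zero_iff _ (IsFractionRing.injective _ _)).mpr
    (simpleRoot_ne_zero l)), ← map_mul, hD, map_sub, renameFrac_algebraMap, renameToFrac_apply]

lemma algebraMap_prod_demazure_apply (L : List {l : ℕ // l + 1 < m}) (f : P) :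
    algebraMap P K ((L.map D).prod f) = ∑ u, demazureCoeff R L u * renameToFrac u f := by
  induction L with
  | nil => simp [demazureCoeff, renameToFrac_apply]
  | cons l L ih =>
    have hσ : renameFrac (simpleRefl m l) (algebraMap P K ((L.map D).prod f)) =
        ∑ v, renameFrac (simpleRefl m l) (demazureCoeff R L (simpleRefl m l * v)) *
          renameToFrac v f := by
      rw [ih, map_sum]
      refine Fintype.sum_equiv (Equiv.mulLeft (simpleRefl m l)) _ _ fun u => ?_
      simp [renameFrac_renameToFrac, simpleRefl_mul_simpleRefl_mul]
    rw [List.map_cons, List.prod_cons, Module.End.mul_apply, algebraMap_demazure_apply hD, hσ, ih,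
      ← sum_sub_distrib, mul_sum]
    refine sum_congr rfl fun v _ => ?_
    simp only [demazureCoeff]
    ring

lemma sum_mul_demazureCoeff_eq_zero {ι : Type*} [Fintype ι] {c : ι → P}
    {W : ι → List {l : ℕ // l + 1 < m}}
    (h : ∑ i, (LinearMap.mulLeft R (c i) : Module.End R P) * ((W i).map D).prod = 0)
    (u : Equiv.Perm (Fin m)) :
    ∑ i, algebraMap P K (c i) * demazureCoeff R (W i) u = 0 := by
  revert u
  refine eq_zero_of_sum_mul_renameToFrac fun f => ?_
  have hf := congrArg (algebraMap P K) (LinearMap.congr_fun h f)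
  simp only [LinearMap.sum_apply, Module.End.mul_apply, LinearMap.mulLeft_apply, map_sum,
    map_mul, algebraMap_prod_demazure_apply hD, mul_sum, LinearMap.zero_apply, map_zero] at hf
  rw [sum_comm] at hf
  simpa [sum_mul, mul_assoc] using hf

end Operators

lemma demazureCoeff_eq_zero {L : List {l : ℕ // l + 1 < m}} {u : Equiv.Perm (Fin m)}
    (hlen : L.length ≤ lenPerm m u) (hu : u ≠ (L.map (simpleRefl m)).prod) :
    demazureCoeff R L u = 0 := by
  induction L generalizing u with
  | nil => exact if_neg hu
  | cons l L ih =>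
    rw [List.length_cons] at hlen
    have hL := lenPerm_prod_le_length L
    have hu₁ : demazureCoeff R L u = 0 :=
      ih (by omega) fun h => by rw [h] at hlen; omega
    have hu₂ : demazureCoeff R L (simpleRefl m l * u) = 0 :=
      ih (by have := lenPerm_le_simpleRefl_mul l u; omega)
        fun h => hu (by simp [← h, simpleRefl_mul_simpleRefl_mul])
    simp [demazureCoeff, hu₁, hu₂]

lemma demazureCoeff_prod_ne_zero {L : List {l : ℕ // l + 1 < m}}
    (hL : lenPerm m (L.map (simpleRefl m)).prod = L.length) :
    demazureCoeff R L (L.map (simpleRefl m)).prod ≠ 0 := by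
  induction L with
  | nil => simp [demazureCoeff]
  | cons l L ih =>
    simp only [List.map_cons, List.prod_cons, List.length_cons] at hL ⊢
    set w := (L.map (simpleRefl m)).prod
    have hw : lenPerm m w = L.length := le_antisymm (lenPerm_prod_le_length L)
      (by have := lenPerm_simpleRefl_mul_le l w; omega)
    have hsw : demazureCoeff R L (simpleRefl m l * w) = 0 :=
      demazureCoeff_eq_zero (by omega) fun h =>
        simpleRefl_ne_one l (mul_right_cancel (h.trans (one_mul w).symm))
    rw [demazureCoeff, simpleRefl_mul_simpleRefl_mul, hsw, zero_sub]
    exact mul_ne_zero (inv_ne_zero ((map_ne_zero_iff _ (IsFractionRing.injective _ _)).mpr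
      (simpleRoot_ne_zero l))) (neg_ne_zero.mpr ((map_ne_zero _).mpr (ih hw)))

end Demazure

theorem nilHecke_faithful (k : Type*) [Field k]
    (D : {l : ℕ // l + 1 < m} → Module.End k (MvPolynomial (Fin m) k))
    (hD : ∀ (l : {l : ℕ // l + 1 < m}) (f : MvPolynomial (Fin m) k),
      (X ⟨l, Nat.lt_of_succ_lt l.2⟩ - X ⟨(l : ℕ) + 1, l.2⟩) * D l f =
        f - rename (simpleRefl m l) f)
    (R : Equiv.Perm (Fin m) → List {l : ℕ // l + 1 < m})
    (hR : ∀ w : Equiv.Perm (Fin m),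
      ((R w).map (simpleRefl m)).prod = w ∧ (R w).length = lenPerm m w)
    (c : Equiv.Perm (Fin m) → MvPolynomial (Fin m) k)
    (hzero : ∑ w : Equiv.Perm (Fin m),
      (LinearMap.mulLeft k (c w) : Module.End k (MvPolynomial (Fin m) k))
        * ((R w).map D).prod = 0) :
    ∀ w : Equiv.Perm (Fin m), c w = 0 := by
  classical
  have hcoeff := sum_mul_demazureCoeff_eq_zero hD hzero
  by_contra! ⟨w₁, hw₁⟩
  obtain ⟨w₀, hw₀, hmax⟩ := (univ.filter fun w => c w ≠ 0).exists_max_image (lenPerm m)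
    ⟨w₁, by simpa using hw₁⟩
  rw [mem_filter] at hw₀
  have htop := hcoeff w₀
  rw [sum_eq_single w₀ ?_ (by simp)] at htop
  · refine mul_ne_zero ((map_ne_zero_iff _ (IsFractionRing.injective _ _)).mpr hw₀.2) ?_ htop
    simpa [(hR w₀).1] using
      demazureCoeff_prod_ne_zero (R := k) (L := R w₀) (by rw [(hR w₀).1, (hR w₀).2])
  · intro w _ hw
    by_cases hcw : c w = 0
    · simp [hcw]
    rw [demazureCoeff_eq_zero (by rw [(hR w).2]; exact hmax w (by simpa))
      (by rw [(hR w).1]; exact Ne.symm hw), mul_zero]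
end
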